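/- arXiv:1606.08004 — 2 statements merged into one kernel-verified Lean document; each statement's English description precedes it below -/
import Mathlib

section
/- There exists a constant C > 0 such that for every r ∈ (0, 1/2), (1/C)·|log r| ≤ ‖x ↦ 1/|x|‖_{L^{2,1}(𝔻 ∖ B̄(0,r))} ≤ C·|log r|, where the norm is taken on the annulus 𝔻 ∖ B̄(0,r). -/
open MeasureTheory Metric Set
open scoped ENNReal

noncomputable section

abbrev E2 := EuclideanSpace ℝ (Fin 2)

/-- Distribution function of `f` restricted to `Ω` with respect to the measure `μ`. -/
def distribFn {α E : Type*} [MeasurableSpace α] (μ : Measure α) (Ω : Set α)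
    [NormedAddCommGroup E] (f : α → E) (s : ℝ) : ℝ≥0∞ :=
  μ {x ∈ Ω | s < ‖f x‖}

/-- Decreasing rearrangement of `|f|` restricted to `Ω`. -/
def decRearr {α E : Type*} [MeasurableSpace α] (μ : Measure α) (Ω : Set α)
    [NormedAddCommGroup E] (f : α → E) (t : ℝ) : ℝ :=
  sInf {s : ℝ | 0 ≤ s ∧ distribFn μ Ω f s ≤ ENNReal.ofReal t}

/-- The Lorentz `L^{2,1}` norm of `f` on `Ω` :
`‖f‖_{L^{2,1}(Ω)} = ∫₀^∞ t^{1/2} f^*(t) dt/t`. -/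
def L21Norm {α E : Type*} [MeasurableSpace α] (μ : Measure α) (Ω : Set α)
    [NormedAddCommGroup E] (f : α → E) : ℝ≥0∞ :=
  ∫⁻ t in Set.Ioi (0 : ℝ), ENNReal.ofReal (t ^ ((1 : ℝ) / 2) * decRearr μ Ω f t / t)

/-! The distribution function of `1 / ‖x‖` at level `1 / ρ` on a set avoiding the origin is the
measure of its intersection with `B(0, ρ)`. On the annulus this gives
`g(t) ≤ min (1 / r) (√π / √t)`, `g(t) = 0` for `t ≥ π = |𝔻|`, and `g(t) ≥ √(π / 2) / √t` for
`π r² < t < π / 2`, where `g` is the decreasing rearrangement. The `L^{2,1}` integrand is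
`g(t) / √t`: the range `t ≤ π r²` contributes `O(1)`, and on `π r² < t < π` it is comparable to
`1 / t`, whose integral there is `2 |log r|`. -/

open Real

theorem lintegral_Ioi_le_Ioc_add_Ioo_add_Ici (F : ℝ → ℝ≥0∞) (a b : ℝ) :
    ∫⁻ t in Ioi 0, F t ≤
      (∫⁻ t in Ioc 0 a, F t) + (∫⁻ t in Ioo a b, F t) + ∫⁻ t in Ici b, F t := by
  have hcover : Ioi (0 : ℝ) ⊆ Ioc 0 a ∪ Ioo a b ∪ Ici b := by
    intro t (ht : 0 < t)
    by_cases hta : t ≤ a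
    · exact Or.inl (Or.inl ⟨ht, hta⟩)
    by_cases htb : t < b
    · exact Or.inl (Or.inr ⟨lt_of_not_ge hta, htb⟩)
    · exact Or.inr (le_of_not_gt htb)
  calc ∫⁻ t in Ioi 0, F t
      ≤ ∫⁻ t in Ioc 0 a ∪ Ioo a b ∪ Ici b, F t := lintegral_mono_set hcover
    _ ≤ _ := (lintegral_union_le F _ _).trans (add_le_add (lintegral_union_le F _ _) le_rfl)

theorem lintegral_Ioo_ofReal_div {c a b : ℝ} (hc : 0 ≤ c) (ha : 0 < a) (hab : a ≤ b) :
    ∫⁻ t in Ioo a b, ENNReal.ofReal (c / t) = ENNReal.ofReal (c * log (b / a)) := by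
  have hcont : ContinuousOn (fun t : ℝ => c / t) (uIcc a b) :=
    continuousOn_const.div continuousOn_id fun t ht =>
      (ha.trans_le (uIcc_of_le hab ▸ ht).1).ne'
  rw [← ofReal_integral_eq_lintegral_ofReal
      ((hcont.intervalIntegrable.1).mono_set Ioo_subset_Ioc_self)
      ((ae_restrict_mem measurableSet_Ioo).mono fun t ht => div_nonneg hc (ha.trans ht.1).le),
    integral_Ioc_eq_integral_Ioo.symm, ← intervalIntegral.integral_of_le hab]
  simp_rw [div_eq_mul_inv c]
  rw [intervalIntegral.integral_const_mul, integral_inv_of_pos ha (ha.trans_le hab)]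

theorem lintegral_Ioc_ofReal_div_sqrt {c a : ℝ} (hc : 0 ≤ c) (ha : 0 ≤ a) :
    ∫⁻ t in Ioc 0 a, ENNReal.ofReal (c / √t) = ENNReal.ofReal (2 * c * √a) := by
  have hrpow : EqOn (fun t : ℝ => c / √t) (fun t => c * t ^ (-(1 : ℝ) / 2)) (Ioc 0 a) :=
    fun t ht => by
      show c / √t = c * t ^ (-(1 : ℝ) / 2)
      rw [sqrt_eq_rpow, div_eq_mul_inv, ← rpow_neg ht.1.le, neg_div]
  rw [setLIntegral_congr_fun measurableSet_Ioc fun t ht => congrArg ENNReal.ofReal (hrpow ht),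
    ← ofReal_integral_eq_lintegral_ofReal
      ((intervalIntegrable_iff_integrableOn_Ioc_of_le ha).1
        ((intervalIntegral.intervalIntegrable_rpow' (by norm_num)).const_mul c))
      ((ae_restrict_mem measurableSet_Ioc).mono fun t ht => mul_nonneg hc (rpow_nonneg ht.1.le _)),
    ← intervalIntegral.integral_of_le ha, intervalIntegral.integral_const_mul,
    integral_rpow (Or.inl (by norm_num))]
  congr 1
  rw [show -(1 : ℝ) / 2 + 1 = 1 / 2 by norm_num, zero_rpow (by norm_num), ← sqrt_eq_rpow]
  ring

theorem div_sqrt_div_sqrt {c t : ℝ} (ht : 0 ≤ t) : c / √t / √t = c / t := by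
  rw [div_div, mul_self_sqrt ht]

section Rearrangement

variable {α E : Type*} [MeasurableSpace α] [NormedAddCommGroup E]
  {μ : Measure α} {Ω : Set α} {f : α → E}

theorem distribFn_antitone : Antitone (distribFn μ Ω f) :=
  fun _ _ hst => measure_mono fun _ ⟨hx, hlt⟩ => ⟨hx, hst.trans_lt hlt⟩

theorem distribFn_eq_zero_of_forall_norm_le {M : ℝ} (hf : ∀ x ∈ Ω, ‖f x‖ ≤ M) :
    distribFn μ Ω f M = 0 := by
  rw [distribFn, ← measure_empty (μ := μ)]
  congr 1
  exact eq_empty_of_forall_notMem fun x ⟨hx, hlt⟩ => (hf x hx).not_gt hlt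

theorem decRearr_nonneg (t : ℝ) : 0 ≤ decRearr μ Ω f t :=
  Real.sInf_nonneg fun _ hs => hs.1

theorem decRearr_le {s t : ℝ} (hs : 0 ≤ s) (h : distribFn μ Ω f s ≤ ENNReal.ofReal t) :
    decRearr μ Ω f t ≤ s :=
  csInf_le ⟨0, fun _ hx => hx.1⟩ ⟨hs, h⟩

theorem decRearr_le_of_forall_norm_le {M : ℝ} (hM : 0 ≤ M) (hf : ∀ x ∈ Ω, ‖f x‖ ≤ M)
    (t : ℝ) : decRearr μ Ω f t ≤ M :=
  decRearr_le hM ((distribFn_eq_zero_of_forall_norm_le hf).trans_le bot_le)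

theorem decRearr_eq_zero {t : ℝ} (h : μ Ω ≤ ENNReal.ofReal t) : decRearr μ Ω f t = 0 :=
  (decRearr_le le_rfl ((measure_mono (sep_subset _ _)).trans h)).antisymm (decRearr_nonneg t)

theorem le_decRearr {M s t : ℝ} (hM : 0 ≤ M) (hf : ∀ x ∈ Ω, ‖f x‖ ≤ M)
    (h : ENNReal.ofReal t < distribFn μ Ω f s) : s ≤ decRearr μ Ω f t := by
  refine le_csInf ⟨M, hM, (distribFn_eq_zero_of_forall_norm_le hf).trans_le bot_le⟩ ?_
  rintro s' ⟨-, hs'⟩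
  by_contra! hlt
  exact (h.trans_le (distribFn_antitone hlt.le)).not_ge hs'

theorem L21Norm_eq_lintegral_div_sqrt :
    L21Norm μ Ω f = ∫⁻ t in Ioi 0, ENNReal.ofReal (decRearr μ Ω f t / √t) := by
  refine setLIntegral_congr_fun measurableSet_Ioi fun t (ht : 0 < t) => ?_
  rw [← sqrt_eq_rpow]
  congr 1
  field_simp
  rw [sq_sqrt ht.le, mul_comm]

theorem lintegral_Ioc_decRearr_div_sqrt_le {M a : ℝ} (hM : 0 ≤ M) (hf : ∀ x ∈ Ω, ‖f x‖ ≤ M)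
    (ha : 0 ≤ a) :
    ∫⁻ t in Ioc 0 a, ENNReal.ofReal (decRearr μ Ω f t / √t) ≤ ENNReal.ofReal (2 * M * √a) := by
  rw [← lintegral_Ioc_ofReal_div_sqrt hM ha]
  refine setLIntegral_mono' measurableSet_Ioc fun t _ => ENNReal.ofReal_le_ofReal ?_
  gcongr
  exact decRearr_le_of_forall_norm_le hM hf t

theorem lintegral_Ici_decRearr_div_sqrt {b : ℝ} (h : μ Ω ≤ ENNReal.ofReal b) :
    ∫⁻ t in Ici b, ENNReal.ofReal (decRearr μ Ω f t / √t) = 0 := by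
  refine (setLIntegral_congr_fun measurableSet_Ici fun t (ht : b ≤ t) => ?_).trans lintegral_zero
  rw [decRearr_eq_zero (h.trans (ENNReal.ofReal_le_ofReal ht)), zero_div, ENNReal.ofReal_zero]

end Rearrangement

theorem distribFn_one_div_norm {F : Type*} [NormedAddCommGroup F] [MeasurableSpace F]
    (μ : Measure F) {Ω : Set F} (h0 : (0 : F) ∉ Ω) {ρ : ℝ} (hρ : 0 < ρ) :
    distribFn μ Ω (fun x => 1 / ‖x‖) (1 / ρ) = μ (Ω ∩ ball 0 ρ) := by
  rw [distribFn]
  congr 1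
  ext x
  refine and_congr_right fun hx => ?_
  have hx0 : 0 < ‖x‖ := norm_pos_iff.2 fun h => h0 (h ▸ hx)
  rw [norm_div, norm_one, norm_norm, one_div_lt_one_div hρ hx0, mem_ball_zero_iff]

theorem decRearr_one_div_norm_le {Ω : Set E2} (h0 : (0 : E2) ∉ Ω) {t : ℝ} (ht : 0 < t) :
    decRearr volume Ω (fun x => 1 / ‖x‖) t ≤ √π / √t := by
  have hρ : 0 < √t / √π := by positivity
  refine decRearr_le (by positivity) ?_
  rw [← one_div_div, distribFn_one_div_norm volume h0 hρ]
  calc volume (Ω ∩ ball 0 (√t / √π)) ≤ volume (ball (0 : E2) (√t / √π)) :=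
        measure_mono inter_subset_right
    _ = ENNReal.ofReal t := by
        rw [EuclideanSpace.volume_ball_fin_two, ← ENNReal.ofReal_pow hρ.le,
          ← ENNReal.ofReal_mul (by positivity), div_pow, sq_sqrt ht.le, sq_sqrt pi_nonneg,
          div_mul_cancel₀ _ pi_ne_zero]

def annulus (r : ℝ) : Set E2 := ball 0 1 \ closedBall 0 r

section Annulus

variable {r : ℝ}

theorem zero_notMem_annulus (hr : 0 ≤ r) : (0 : E2) ∉ annulus r :=
  fun h => h.2 (mem_closedBall_self hr)

theorem norm_one_div_norm_le_of_mem_annulus (hr : 0 < r) {x : E2} (hx : x ∈ annulus r) :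
    ‖1 / ‖x‖‖ ≤ 1 / r := by
  have hrx : r < ‖x‖ := by simpa using hx.2
  rw [norm_div, norm_one, norm_norm]
  exact one_div_le_one_div_of_le hr hrx.le

theorem volume_annulus_le : volume (annulus r) ≤ ENNReal.ofReal π := by
  calc volume (annulus r) ≤ volume (ball (0 : E2) 1) := measure_mono sdiff_subset
    _ = ENNReal.ofReal π := by simp

theorem volume_annulus_inter_ball (hr : 0 ≤ r) {ρ : ℝ} (hrρ : r < ρ) (hρ : ρ ≤ 1) :
    volume (annulus r ∩ ball 0 ρ) = ENNReal.ofReal (π * (ρ ^ 2 - r ^ 2)) := by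
  have hset : annulus r ∩ ball 0 ρ = ball 0 ρ \ closedBall 0 r := by
    ext x
    simp only [annulus, mem_inter_iff, mem_sdiff, mem_ball_zero_iff]
    exact ⟨fun h => ⟨h.2, h.1.2⟩, fun h => ⟨⟨h.1.trans_le hρ, h.2⟩, h.1⟩⟩
  rw [hset, measure_sdiff (closedBall_subset_ball hrρ) measurableSet_closedBall.nullMeasurableSet
      measure_closedBall_lt_top.ne, EuclideanSpace.volume_ball_fin_two,
    EuclideanSpace.volume_closedBall_fin_two, ← ENNReal.ofReal_pow (hr.trans hrρ.le),
    ← ENNReal.ofReal_pow hr, ← ENNReal.ofReal_mul (by positivity),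
    ← ENNReal.ofReal_mul (by positivity), ← ENNReal.ofReal_sub _ (by positivity)]
  ring_nf

theorem le_decRearr_one_div_norm_annulus (hr : 0 < r) {t : ℝ} (hrt : π * r ^ 2 < t)
    (ht : t < π / 2) :
    √(π / 2) / √t ≤ decRearr volume (annulus r) (fun x => 1 / ‖x‖) t := by
  have ht0 : 0 < t := (by positivity : 0 ≤ π * r ^ 2).trans_lt hrt
  set ρ := √t / √(π / 2)
  have hρ0 : 0 < ρ := by positivity
  have hρsq : ρ ^ 2 = 2 * t / π := by
    rw [div_pow, sq_sqrt ht0.le, sq_sqrt (by positivity)]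
    field_simp
  have hrρ : r < ρ := by
    refine lt_of_pow_lt_pow_left₀ 2 hρ0.le ?_
    rw [hρsq, lt_div_iff₀ pi_pos]
    nlinarith
  have hρ1 : ρ ≤ 1 := by
    refine (pow_le_one_iff_of_nonneg hρ0.le two_ne_zero).1 ?_
    rw [hρsq, div_le_one pi_pos]
    linarith
  rw [← one_div_div]
  refine le_decRearr (one_div_nonneg.2 hr.le)
    (fun x hx => norm_one_div_norm_le_of_mem_annulus hr hx) ?_
  rw [distribFn_one_div_norm volume (zero_notMem_annulus hr.le) hρ0,
    volume_annulus_inter_ball hr.le hrρ hρ1,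
    ENNReal.ofReal_lt_ofReal_iff (mul_pos pi_pos (by nlinarith)), hρsq]
  field_simp
  nlinarith

theorem L21Norm_one_div_norm_annulus_le (hr : 0 < r) (hr1 : r ≤ 1) :
    L21Norm volume (annulus r) (fun x => 1 / ‖x‖) ≤ ENNReal.ofReal (2 * √π * (1 - log r)) := by
  set g := decRearr volume (annulus r) (fun x : E2 => 1 / ‖x‖)
  set a := π * r ^ 2 with ha_def
  have ha : 0 < a := by positivity
  have haπ : a ≤ π := by
    rw [ha_def]
    nlinarith [pi_pos, pow_le_one₀ hr.le hr1 (n := 2)]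
  have hsmall : ∫⁻ t in Ioc 0 a, ENNReal.ofReal (g t / √t) ≤ ENNReal.ofReal (2 * √π) := by
    convert lintegral_Ioc_decRearr_div_sqrt_le (one_div_nonneg.2 hr.le)
      (fun x hx => norm_one_div_norm_le_of_mem_annulus hr hx) ha.le using 2
    rw [ha_def, sqrt_mul pi_nonneg, sqrt_sq hr.le]
    field_simp
  have hmiddle : ∫⁻ t in Ioo a π, ENNReal.ofReal (g t / √t) ≤
      ENNReal.ofReal (√π * (-2 * log r)) := by
    calc ∫⁻ t in Ioo a π, ENNReal.ofReal (g t / √t)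
        ≤ ∫⁻ t in Ioo a π, ENNReal.ofReal (√π / t) := by
          refine setLIntegral_mono' measurableSet_Ioo fun t ht => ENNReal.ofReal_le_ofReal ?_
          have ht0 : 0 < t := ha.trans ht.1
          rw [← div_sqrt_div_sqrt ht0.le]
          gcongr
          exact decRearr_one_div_norm_le (zero_notMem_annulus hr.le) ht0
      _ = ENNReal.ofReal (√π * (-2 * log r)) := by
          rw [lintegral_Ioo_ofReal_div (sqrt_nonneg π) ha haπ, ha_def,
            div_mul_cancel_left₀ pi_ne_zero, log_inv, log_pow]
          push_cast
          ring_nf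
  have hlog : 0 ≤ √π * (-2 * log r) :=
    mul_nonneg (sqrt_nonneg π) (by linarith [log_nonpos hr.le hr1])
  rw [L21Norm_eq_lintegral_div_sqrt]
  calc _ ≤ _ := lintegral_Ioi_le_Ioc_add_Ioo_add_Ici _ a π
    _ ≤ ENNReal.ofReal (2 * √π) + ENNReal.ofReal (√π * (-2 * log r)) + 0 := by
        rw [lintegral_Ici_decRearr_div_sqrt volume_annulus_le]
        gcongr
    _ = ENNReal.ofReal (2 * √π * (1 - log r)) := by
        rw [add_zero, ← ENNReal.ofReal_add (by positivity) hlog]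
        ring_nf

theorem le_L21Norm_one_div_norm_annulus (hr : 0 < r) (hr2 : 2 * r ^ 2 ≤ 1) :
    ENNReal.ofReal (√(π / 2) * (-2 * log r - log 2)) ≤
      L21Norm volume (annulus r) (fun x => 1 / ‖x‖) := by
  set a := π * r ^ 2 with ha_def
  have ha : 0 < a := by positivity
  have haπ : a ≤ π / 2 := by
    rw [ha_def]
    nlinarith [pi_pos]
  rw [L21Norm_eq_lintegral_div_sqrt]
  calc ENNReal.ofReal (√(π / 2) * (-2 * log r - log 2))
      = ∫⁻ t in Ioo a (π / 2), ENNReal.ofReal (√(π / 2) / t) := by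
        have hquot : π / 2 / (π * r ^ 2) = (2 * r ^ 2)⁻¹ := by field_simp
        rw [lintegral_Ioo_ofReal_div (sqrt_nonneg _) ha haπ, ha_def, hquot, log_inv,
          log_mul two_ne_zero (pow_ne_zero 2 hr.ne'), log_pow]
        push_cast
        ring_nf
    _ ≤ ∫⁻ t in Ioo a (π / 2),
          ENNReal.ofReal (decRearr volume (annulus r) (fun x => 1 / ‖x‖) t / √t) := by
        refine setLIntegral_mono' measurableSet_Ioo fun t ht => ENNReal.ofReal_le_ofReal ?_
        rw [← div_sqrt_div_sqrt (ha.trans ht.1).le]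
        gcongr
        exact le_decRearr_one_div_norm_annulus hr ht.1 ht.2
    _ ≤ _ := lintegral_mono_set fun t ht => ha.trans ht.1

end Annulus

/-- There is a constant `C > 0` such that for all `r ∈ (0,1/2)`,
`(1/C)·|log r| ≤ ‖x ↦ 1/|x|‖_{L^{2,1}(𝔻 ∖ B̄(0,r))} ≤ C·|log r|`. -/
theorem L21_one_div_norm_annulus :
    ∃ C : ℝ, 0 < C ∧ ∀ r : ℝ, r ∈ Set.Ioo (0 : ℝ) (1 / 2) →
      ENNReal.ofReal (|Real.log r| / C) ≤
          L21Norm volume (ball (0 : E2) 1 \ closedBall 0 r) (fun x => 1 / ‖x‖) ∧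
        L21Norm volume (ball (0 : E2) 1 \ closedBall 0 r) (fun x => 1 / ‖x‖) ≤
          ENNReal.ofReal (C * |Real.log r|) := by
  refine ⟨12, by norm_num, fun r ⟨hr0, hr⟩ => ?_⟩
  have habs : |log r| = -log r := abs_of_neg (log_neg hr0 (by linarith))
  have hlog2 : log 2 ≤ -log r := by
    rw [← log_inv, ← one_div]
    exact log_le_log (by norm_num) ((le_one_div (by norm_num) hr0).2 hr.le)
  have hlog2_pos : 1 / 2 < log 2 := by linarith [log_two_gt_d9]
  have hsqrtπ : √π ≤ 2 := sqrt_le_iff.2 ⟨by norm_num, by linarith [pi_le_four]⟩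
  have hsqrtπ2 : 1 ≤ √(π / 2) := le_sqrt_of_sq_le (by linarith [pi_gt_three])
  refine ⟨?_, ?_⟩
  · refine (ENNReal.ofReal_le_ofReal ?_).trans
      (le_L21Norm_one_div_norm_annulus hr0 (by nlinarith))
    rw [habs]
    nlinarith
  · refine (L21Norm_one_div_norm_annulus_le hr0 (by linarith)).trans
      (ENNReal.ofReal_le_ofReal ?_)
    rw [habs]
    nlinarith
end
end

section
/- Let h : ℂ ∖ {0} → ℂ be holomorphic, let d ∈ ℝ and C ≥ 1 be such that (1/C)·|z|^d ≤ |h(z)| ≤ C·|z|^d for all z ≠ 0. Then d is an integer and there exists c ∈ ℂ ∖ {0} such that h(z) = c·z^d for all z ≠ 0. If, moreover, h admits a holomorphic primitive on ℂ ∖ {0} (a holomorphic ψ : ℂ ∖ {0} → ℂ with ψ' = h), then d ≠ −1. -/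
open Complex Metric
open scoped Real

/-!
Composing with `exp` turns `h` into an entire function `t ↦ h (exp t)` of modulus at most
`C * ‖exp (d * t)‖`, so by Liouville it equals `h 1 * exp (d * t)`. Its `2πi`-periodicity and
`h 1 ≠ 0` force `d ∈ ℤ`, and then `h z = h 1 * z ^ d`. For `d = -1` a primitive is impossible,
since `∮ c * z⁻¹ = 2πi c ≠ 0` along the unit circle.
-/

theorem Differentiable.eq_mul_cexp_of_norm_le {f : ℂ → ℂ} (hf : Differentiable ℂ f) {a : ℂ}
    {M : ℝ} (hM : ∀ t, ‖f t‖ ≤ M * ‖cexp (a * t)‖) (t : ℂ) : f t = f 0 * cexp (a * t) := by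
  set g : ℂ → ℂ := fun s ↦ f s * cexp (-(a * s))
  have hg : Differentiable ℂ g := by fun_prop
  have hg_bdd : Bornology.IsBounded (Set.range g) := by
    refine isBounded_iff_forall_norm_le.2 ⟨M, ?_⟩
    rintro _ ⟨s, rfl⟩
    calc ‖g s‖ = ‖f s‖ * ‖cexp (a * s)‖⁻¹ := by simp [g, Complex.exp_neg]
      _ ≤ M * ‖cexp (a * s)‖ * ‖cexp (a * s)‖⁻¹ := by gcongr; exact hM s
      _ = M := by field_simp
  have := hg.apply_eq_apply_of_bounded hg_bdd t 0
  simp only [g, mul_zero, neg_zero, exp_zero, mul_one] at this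
  rw [← this, mul_assoc, ← exp_add, neg_add_cancel, exp_zero, mul_one]

theorem apply_cexp_eq_mul_cexp_of_norm_le_rpow {h : ℂ → ℂ} (hh : DifferentiableOn ℂ h {0}ᶜ)
    {d C : ℝ} (hup : ∀ z : ℂ, z ≠ 0 → ‖h z‖ ≤ C * ‖z‖ ^ d) (t : ℂ) :
    h (cexp t) = h 1 * cexp (d * t) := by
  have hdiff : Differentiable ℂ (h ∘ cexp) := fun s ↦
    (hh.differentiableAt (isOpen_compl_singleton.mem_nhds (Complex.exp_ne_zero s))).comp s
      differentiableAt_exp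
  have hbound : ∀ s, ‖(h ∘ cexp) s‖ ≤ C * ‖cexp (d * s)‖ := fun s ↦ by
    have := hup _ (Complex.exp_ne_zero s)
    rwa [Complex.norm_exp, ← Real.exp_mul, mul_comm _ d, ← re_ofReal_mul,
      ← Complex.norm_exp] at this
  simpa using hdiff.eq_mul_cexp_of_norm_le hbound t

theorem exists_eq_mul_zpow_of_apply_cexp_eq {h : ℂ → ℂ} {a c : ℂ} (hc : c ≠ 0)
    (hexp : ∀ t, h (cexp t) = c * cexp (a * t)) :
    ∃ n : ℤ, a = n ∧ ∀ z : ℂ, z ≠ 0 → h z = c * z ^ n := by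
  obtain ⟨n, hn⟩ : ∃ n : ℤ, a * (2 * π * I) = n * (2 * π * I) := by
    rw [← exp_eq_one_iff, ← mul_right_inj' hc, mul_one, ← hexp, exp_two_pi_mul_I, ← exp_zero,
      hexp, mul_zero, exp_zero, mul_one]
  have ha : a = n := mul_right_cancel₀ two_pi_I_ne_zero hn
  refine ⟨n, ha, fun z hz ↦ ?_⟩
  rw [← exp_log hz, hexp, ha, exp_int_mul]

theorem eq_zero_of_forall_hasDerivAt_mul_inv {ψ : ℂ → ℂ} {c : ℂ}
    (hψ : ∀ z : ℂ, z ≠ 0 → HasDerivAt ψ (c * z⁻¹) z) : c = 0 := by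
  have hzero : (∮ z in C(0, 1), c * z⁻¹) = 0 :=
    circleIntegral.integral_eq_zero_of_hasDerivWithinAt zero_le_one fun z hz ↦
      (hψ z (ne_zero_of_mem_unit_sphere ⟨z, hz⟩)).hasDerivWithinAt
  have htwo_pi : (∮ z in C(0, 1), c * z⁻¹) = c * (2 * π * I) := by
    rw [circleIntegral.integral_const_mul]
    simpa using congrArg (c * ·) (circleIntegral.integral_sub_center_inv (0 : ℂ) one_ne_zero)
  exact (mul_eq_zero.1 (htwo_pi ▸ hzero)).resolve_right two_pi_I_ne_zero

/-- If `h` is holomorphic on `ℂ ∖ {0}` and `(1/C)|z|^d ≤ |h(z)| ≤ C|z|^d` for all `z ≠ 0`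
(with `d ∈ ℝ`, `C ≥ 1`), then `d` is an integer and `h(z) = c·z^d` for some nonzero constant
`c`; moreover if `h` admits a holomorphic primitive on `ℂ ∖ {0}`, then `d ≠ −1`. -/
theorem holomorphic_two_sided_power_bound
    (h : ℂ → ℂ) (hh : DifferentiableOn ℂ h {(0 : ℂ)}ᶜ)
    (d : ℝ) (C : ℝ) (hC : 1 ≤ C)
    (hlow : ∀ z : ℂ, z ≠ 0 → ‖z‖ ^ d / C ≤ ‖h z‖)
    (hup : ∀ z : ℂ, z ≠ 0 → ‖h z‖ ≤ C * ‖z‖ ^ d) :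
    (∃ n : ℤ, d = (n : ℝ) ∧ ∃ c : ℂ, c ≠ 0 ∧ ∀ z : ℂ, z ≠ 0 → h z = c * z ^ n) ∧
      ((∃ ψ : ℂ → ℂ, ∀ z : ℂ, z ≠ 0 → HasDerivAt ψ (h z) z) → d ≠ -1) := by
  have h_one : h 1 ≠ 0 := by
    intro h0
    have := hlow 1 one_ne_zero
    rw [h0, norm_zero, norm_one, Real.one_rpow] at this
    exact (one_div_pos.2 (zero_lt_one.trans_le hC)).not_ge this
  obtain ⟨n, hdn, hform⟩ :=
    exists_eq_mul_zpow_of_apply_cexp_eq h_one (apply_cexp_eq_mul_cexp_of_norm_le_rpow hh hup)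
  have hd : d = n := by exact_mod_cast hdn
  refine ⟨⟨n, hd, h 1, h_one, hform⟩, ?_⟩
  rintro ⟨ψ, hψ⟩ hd_neg
  obtain rfl : n = -1 := by exact_mod_cast hd.symm.trans hd_neg
  refine h_one (eq_zero_of_forall_hasDerivAt_mul_inv (ψ := ψ) fun z hz ↦ ?_)
  simpa [hform z hz] using hψ z hz
end
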